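/- arXiv:1210.0196 — 2 statements merged into one kernel-verified Lean document; each statement's English description precedes it below -/
import Mathlib

section
/- Let A be an abelian category with enough injectives and let (W₁, F₁), (W₂, F₂), (W₃, F₃) be three injective cotorsion pairs such that F₂ ⊆ F₁ and F₃ ⊆ F₁. Then W₃ ∩ F₁ = F₂ if and only if both W₂ ∩ W₃ = W₁ and F₂ ⊆ W₃. -/
/-!
Splitting is detected by `Ext¹`: a short exact sequence `0 → X → Y → Z → 0` with
`Ext¹(Z, X) = 0` has zero extension class, so by the long exact `Ext` sequences `Z` inherits
every left `Ext¹`-orthogonality of `Y`, and `X` every right one. For `X ∈ W₂ ∩ W₃`, take a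
left approximation `0 → C → V → X → 0` for `(W₁, F₁)`; thickness of `W₃` puts `C` in
`W₃ ∩ F₁ = F₂`, so the sequence splits and `X ∈ W₁`. Conversely, for `X ∈ W₃ ∩ F₁`, take a
right approximation `0 → X → C → V → 0` for `(W₂, F₂)`; then `V ∈ W₂ ∩ W₃ = W₁`, the sequence
splits and `X ∈ F₂`.
-/

open CategoryTheory CategoryTheory.Limits

universe w v u

variable {A : Type u} [Category.{v} A] [Abelian A]

/-- `IsShortExact i p` asserts that `0 → X → Y → Z → 0` is a short exact sequence. -/
def IsShortExact {X Y Z : A} (i : X ⟶ Y) (p : Y ⟶ Z) : Prop :=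
  ∃ w : i ≫ p = 0, (ShortComplex.mk i p w).ShortExact

section Ext

variable [HasExt.{w} A]

/-- `Ext¹(X, Y) = 0`. -/
def Ext1Zero (X Y : A) : Prop := Subsingleton (Abelian.Ext X Y 1)

/-- `(F, C)` is a cotorsion pair: each class is the `Ext¹`-orthogonal of the other. -/
def IsCotorsionPair (F C : Set A) : Prop :=
  (∀ X : A, X ∈ F ↔ ∀ Y ∈ C, Ext1Zero.{w} X Y) ∧
  (∀ Y : A, Y ∈ C ↔ ∀ X ∈ F, Ext1Zero.{w} X Y)

/-- A complete cotorsion pair: for every object `X` there are short exact sequences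
`0 → C → F → X → 0` and `0 → X → C' → F' → 0` with `F, F'` in the left class and
`C, C'` in the right class. -/
def IsCompleteCotorsionPair (F C : Set A) : Prop :=
  IsCotorsionPair.{w} F C ∧
  (∀ X : A, ∃ (Co Fo : A) (i : Co ⟶ Fo) (p : Fo ⟶ X),
    Co ∈ C ∧ Fo ∈ F ∧ IsShortExact i p) ∧
  (∀ X : A, ∃ (Co Fo : A) (i : X ⟶ Co) (p : Co ⟶ Fo),
    Co ∈ C ∧ Fo ∈ F ∧ IsShortExact i p)

end Ext

/-- A thick class: closed under direct summands (retracts) and satisfying two-out-of-three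
for short exact sequences. -/
def IsThickClass (W : Set A) : Prop :=
  (∀ (X Y : A) (s : Y ⟶ X) (r : X ⟶ Y), s ≫ r = 𝟙 Y → X ∈ W → Y ∈ W) ∧
  (∀ ⦃X Y Z : A⦄ (i : X ⟶ Y) (p : Y ⟶ Z), IsShortExact i p →
    (X ∈ W → Y ∈ W → Z ∈ W) ∧ (X ∈ W → Z ∈ W → Y ∈ W) ∧ (Y ∈ W → Z ∈ W → X ∈ W))

/-- The class `F` is closed under kernels of epimorphisms between objects of `F`. -/
def ClosedUnderKernelsOfEpis (F : Set A) : Prop :=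
  ∀ ⦃X Y Z : A⦄ (i : X ⟶ Y) (p : Y ⟶ Z), IsShortExact i p → Y ∈ F → Z ∈ F → X ∈ F

/-- The class `C` is closed under cokernels of monomorphisms between objects of `C`. -/
def ClosedUnderCokernelsOfMonos (C : Set A) : Prop :=
  ∀ ⦃X Y Z : A⦄ (i : X ⟶ Y) (p : Y ⟶ Z), IsShortExact i p → X ∈ C → Y ∈ C → Z ∈ C

/-- An injective cotorsion pair: a complete cotorsion pair `(W, F)` with `W` thick and
`W ∩ F` equal to the class of injective objects. -/
def IsInjectiveCotorsionPair [HasExt.{w} A] (W F : Set A) : Prop :=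
  IsCompleteCotorsionPair.{w} W F ∧ IsThickClass W ∧
  ∀ X : A, (X ∈ W ∧ X ∈ F) ↔ Injective X

/-- A projective cotorsion pair: a complete cotorsion pair `(C, W)` with `W` thick and
`C ∩ W` equal to the class of projective objects. -/
def IsProjectiveCotorsionPair [HasExt.{w} A] (C W : Set A) : Prop :=
  IsCompleteCotorsionPair.{w} C W ∧ IsThickClass W ∧
  ∀ X : A, (X ∈ C ∧ X ∈ W) ↔ Projective X

/-- A Hovey triple `(Q, W, R)`: `W` is thick and both `(Q, W ∩ R)` and `(Q ∩ W, R)` are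
complete cotorsion pairs. -/
def IsHoveyTriple [HasExt.{w} A] (Q W R : Set A) : Prop :=
  IsThickClass W ∧ IsCompleteCotorsionPair.{w} Q (W ∩ R) ∧
    IsCompleteCotorsionPair.{w} (Q ∩ W) R

theorem IsThickClass.closedUnderKernelsOfEpis {W : Set A} (hW : IsThickClass W) :
    ClosedUnderKernelsOfEpis W :=
  fun _ _ _ i p hip hY hZ => ((hW.2 i p hip).2.2) hY hZ

theorem IsThickClass.closedUnderCokernelsOfMonos {W : Set A} (hW : IsThickClass W) :
    ClosedUnderCokernelsOfMonos W :=
  fun _ _ _ i p hip hX hY => ((hW.2 i p hip).1) hX hY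

section Ext

variable [HasExt.{w} A]

namespace CategoryTheory.ShortComplex.ShortExact

variable {S : ShortComplex A} {T : A}

theorem ext1Zero_X₃_of_ext1Zero_X₂ (hS : S.ShortExact) (hsplit : Ext1Zero.{w} S.X₃ S.X₁)
    (h : Ext1Zero.{w} S.X₂ T) : Ext1Zero.{w} S.X₃ T := by
  have hext : hS.extClass = 0 := @Subsingleton.elim _ hsplit _ _
  refine subsingleton_of_forall_eq 0 fun e => ?_
  obtain ⟨x, rfl⟩ :=
    Abelian.Ext.contravariant_sequence_exact₃ hS T e (@Subsingleton.elim _ h _ _) (add_zero 1)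
  rw [hext, Abelian.Ext.zero_comp]

theorem ext1Zero_X₁_of_ext1Zero_X₂ (hS : S.ShortExact) (hsplit : Ext1Zero.{w} S.X₃ S.X₁)
    (h : Ext1Zero.{w} T S.X₂) : Ext1Zero.{w} T S.X₁ := by
  have hext : hS.extClass = 0 := @Subsingleton.elim _ hsplit _ _
  refine subsingleton_of_forall_eq 0 fun e => ?_
  obtain ⟨x, rfl⟩ :=
    Abelian.Ext.covariant_sequence_exact₁ T hS e (@Subsingleton.elim _ h _ _) (zero_add 1)
  rw [hext, Abelian.Ext.comp_zero]

end CategoryTheory.ShortComplex.ShortExact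

namespace IsCotorsionPair

variable {W F W' F' : Set A}

theorem left_subset_of_right_subset (h : IsCotorsionPair.{w} W F)
    (h' : IsCotorsionPair.{w} W' F') (hF : F' ⊆ F) : W ⊆ W' :=
  fun X hX => (h'.1 X).2 fun Y hY => (h.1 X).1 hX Y (hF hY)

theorem mem_left_of_shortExact (h : IsCotorsionPair.{w} W F) {S : ShortComplex A}
    (hS : S.ShortExact) (hsplit : Ext1Zero.{w} S.X₃ S.X₁) (hX₂ : S.X₂ ∈ W) : S.X₃ ∈ W :=
  (h.1 _).2 fun Y hY => hS.ext1Zero_X₃_of_ext1Zero_X₂ hsplit ((h.1 _).1 hX₂ Y hY)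

theorem mem_right_of_shortExact (h : IsCotorsionPair.{w} W F) {S : ShortComplex A}
    (hS : S.ShortExact) (hsplit : Ext1Zero.{w} S.X₃ S.X₁) (hX₂ : S.X₂ ∈ F) : S.X₁ ∈ F :=
  (h.2 _).2 fun X hX => hS.ext1Zero_X₁_of_ext1Zero_X₂ hsplit ((h.2 _).1 hX₂ X hX)

end IsCotorsionPair

variable {W₁ F₁ W₂ F₂ W₃ : Set A}

theorem IsCompleteCotorsionPair.inter_subset_left_of_inter_right_subset (h₁ : IsCompleteCotorsionPair.{w} W₁ F₁)
    (h₂ : IsCotorsionPair.{w} W₂ F₂) (hW₃ : ClosedUnderKernelsOfEpis W₃) (hW₁₃ : W₁ ⊆ W₃)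
    (hF : W₃ ∩ F₁ ⊆ F₂) : W₂ ∩ W₃ ⊆ W₁ := by
  rintro X ⟨hX₂, hX₃⟩
  obtain ⟨C, V, i, p, hC, hV, w, hS⟩ := h₁.2.1 X
  have hCF₂ : C ∈ F₂ := hF ⟨hW₃ i p ⟨w, hS⟩ (hW₁₃ hV) hX₃, hC⟩
  exact h₁.1.mem_left_of_shortExact hS ((h₂.1 X).1 hX₂ C hCF₂) hV

theorem IsCompleteCotorsionPair.inter_subset_right_of_inter_left_subset
    (h₂ : IsCompleteCotorsionPair.{w} W₂ F₂) (h₁ : IsCotorsionPair.{w} W₁ F₁) (hW₃ : ClosedUnderCokernelsOfMonos W₃)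
    (hF₂₃ : F₂ ⊆ W₃) (hW : W₂ ∩ W₃ ⊆ W₁) : W₃ ∩ F₁ ⊆ F₂ := by
  rintro X ⟨hX₃, hX₁⟩
  obtain ⟨C, V, i, p, hC, hV, w, hS⟩ := h₂.2.2 X
  have hVW₁ : V ∈ W₁ := hW ⟨hV, hW₃ i p ⟨w, hS⟩ hX₃ (hF₂₃ hC)⟩
  exact h₂.1.mem_right_of_shortExact hS ((h₁.1 V).1 hVW₁ X hX₁) hC

end Ext

theorem recollement_conditions_equivalent_general [HasExt.{w} A]
    (W₁ F₁ W₂ F₂ W₃ F₃ : Set A)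
    (h1 : IsInjectiveCotorsionPair.{w} W₁ F₁)
    (h2 : IsInjectiveCotorsionPair.{w} W₂ F₂)
    (h3 : IsInjectiveCotorsionPair.{w} W₃ F₃)
    (h21 : F₂ ⊆ F₁) (h31 : F₃ ⊆ F₁) :
    W₃ ∩ F₁ = F₂ ↔ (W₂ ∩ W₃ = W₁ ∧ F₂ ⊆ W₃) := by
  have hW₁₂ : W₁ ⊆ W₂ := h1.1.1.left_subset_of_right_subset h2.1.1 h21
  have hW₁₃ : W₁ ⊆ W₃ := h1.1.1.left_subset_of_right_subset h3.1.1 h31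
  constructor
  · intro hF
    refine ⟨(h1.1.inter_subset_left_of_inter_right_subset h2.1.1
      h3.2.1.closedUnderKernelsOfEpis hW₁₃ hF.subset).antisymm
        fun X hX => ⟨hW₁₂ hX, hW₁₃ hX⟩, ?_⟩
    exact hF ▸ Set.inter_subset_left
  · rintro ⟨hW, hF₂₃⟩
    exact (h2.1.inter_subset_right_of_inter_left_subset h1.1.1
      h3.2.1.closedUnderCokernelsOfMonos hF₂₃ hW.subset).antisymm
        fun X hX => ⟨hF₂₃ hX, h21 hX⟩

theorem recollement_conditions_equivalent [EnoughInjectives A] [HasExt.{w} A]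
    (W₁ F₁ W₂ F₂ W₃ F₃ : Set A)
    (h1 : IsInjectiveCotorsionPair.{w} W₁ F₁)
    (h2 : IsInjectiveCotorsionPair.{w} W₂ F₂)
    (h3 : IsInjectiveCotorsionPair.{w} W₃ F₃)
    (h21 : F₂ ⊆ F₁) (h31 : F₃ ⊆ F₁) :
    W₃ ∩ F₁ = F₂ ↔ (W₂ ∩ W₃ = W₁ ∧ F₂ ⊆ W₃) :=
  recollement_conditions_equivalent_general W₁ F₁ W₂ F₂ W₃ F₃ h1 h2 h3 h21 h31
end

section
/- Let A be an abelian category with enough injectives and let (W, F) and (W', F') be injective cotorsion pairs with F' ⊆ F. Then for any short exact sequence 0 → X → Y → Z → 0 with X ∈ F and Y, Z ∈ F', one has X ∈ F'. -/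
open CategoryTheory CategoryTheory.Limits

universe w v u

variable {A : Type u} [Category.{v} A] [Abelian A]

/-!
Take a special `F'`-preenvelope `0 → X → E → C → 0` with `E ∈ F'` and `C ∈ W'`. Pushing the
given sequence out along `X → E` shows that `C ∈ F'`, so `C` is injective and therefore lies
in `W`. As `X ∈ F`, the preenvelope splits, and `X` is a direct summand of `E ∈ F'`.
-/

lemma CategoryTheory.IsPushout.isShortExact {X₁ X₂ X₃ X₄ Z : A} {t : X₁ ⟶ X₂} {l : X₁ ⟶ X₃}
    {r : X₂ ⟶ X₄} {b : X₃ ⟶ X₄} (sq : IsPushout t l r b) {p : X₂ ⟶ Z} (hS : IsShortExact t p) :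
    IsShortExact b (sq.desc p 0 (by rw [comp_zero, hS.1])) := by
  obtain ⟨w, hS⟩ := hS
  have : Mono t := hS.mono_f
  have : Epi p := hS.epi_g
  have : Mono b := (MorphismProperty.monomorphisms A).of_isPushout sq.flip ‹Mono t›
  have hw : t ≫ p = l ≫ 0 := by rw [comp_zero, w]
  have : Epi (sq.desc p 0 hw) := epi_of_epi_fac (sq.inl_desc _ _ _)
  refine ⟨sq.inr_desc _ _ _, .mk' (ShortComplex.exact_of_g_is_cokernel _
    (CokernelCofork.IsColimit.ofπ' _ _ fun {T} k hk => ?_)) ‹Mono b› ‹Epi _›⟩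
  have hrk : t ≫ r ≫ k = 0 := by rw [sq.w_assoc, hk, comp_zero]
  refine ⟨hS.gIsCokernel.desc (CokernelCofork.ofπ (r ≫ k) hrk), sq.hom_ext ?_ ?_⟩
  · simpa using Cofork.IsColimit.π_desc (t := CokernelCofork.ofπ (r ≫ k) hrk) hS.gIsCokernel
  · simpa using hk.symm

section Ext

variable [HasExt.{w} A] {V X₁ X₂ X₃ : A} {i : X₁ ⟶ X₂} {p : X₂ ⟶ X₃}

lemma ext1Zero_iff_forall_eq_zero {X Y : A} :
    Ext1Zero.{w} X Y ↔ ∀ e : Abelian.Ext X Y 1, e = 0 :=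
  ⟨fun h e => @Subsingleton.elim _ h e 0, fun h => ⟨fun a b => (h a).trans (h b).symm⟩⟩

lemma ext1Zero_X₂_of_isShortExact (hip : IsShortExact i p) (h₁ : Ext1Zero.{w} V X₁)
    (h₃ : Ext1Zero.{w} V X₃) : Ext1Zero.{w} V X₂ := by
  obtain ⟨w, hS⟩ := hip
  rw [ext1Zero_iff_forall_eq_zero] at h₁ h₃ ⊢
  intro e
  obtain ⟨e₁, rfl⟩ := Abelian.Ext.covariant_sequence_exact₂ V hS e (h₃ _)
  rw [h₁ e₁, Abelian.Ext.zero_comp]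

lemma ext1Zero_X₁_of_split (hip : IsShortExact i p) (hsplit : Ext1Zero.{w} X₃ X₁)
    (h₂ : Ext1Zero.{w} V X₂) : Ext1Zero.{w} V X₁ := by
  obtain ⟨w, hS⟩ := hip
  rw [ext1Zero_iff_forall_eq_zero] at hsplit h₂ ⊢
  intro e
  obtain ⟨e₃, rfl⟩ := Abelian.Ext.covariant_sequence_exact₁ V hS e (h₂ _) rfl
  rw [hsplit hS.extClass, Abelian.Ext.comp_zero]

lemma ext1Zero_X₃_of_split (hip : IsShortExact i p) (hsplit : Ext1Zero.{w} X₃ X₁)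
    (h₂ : Ext1Zero.{w} V X₂) : Ext1Zero.{w} V X₃ := by
  obtain ⟨w, hS⟩ := hip
  rw [ext1Zero_iff_forall_eq_zero] at hsplit h₂ ⊢
  intro e
  obtain ⟨e₂, rfl⟩ := Abelian.Ext.covariant_sequence_exact₃ V hS e rfl
    (by rw [hsplit hS.extClass, Abelian.Ext.comp_zero])
  rw [h₂ e₂, Abelian.Ext.zero_comp]

end Ext

namespace IsCotorsionPair

variable [HasExt.{w} A] {W F : Set A} {X₁ X₂ X₃ : A} {i : X₁ ⟶ X₂} {p : X₂ ⟶ X₃}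

lemma ext1Zero (h : IsCotorsionPair.{w} W F) {X Y : A} (hX : X ∈ W) (hY : Y ∈ F) :
    Ext1Zero.{w} X Y :=
  (h.2 Y).1 hY X hX

lemma extension_mem_right (h : IsCotorsionPair.{w} W F) (hip : IsShortExact i p)
    (h₁ : X₁ ∈ F) (h₃ : X₃ ∈ F) : X₂ ∈ F :=
  (h.2 X₂).2 fun _ hV => ext1Zero_X₂_of_isShortExact hip (h.ext1Zero hV h₁) (h.ext1Zero hV h₃)

lemma kernel_mem_right_of_split (h : IsCotorsionPair.{w} W F) (hip : IsShortExact i p)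
    (hsplit : Ext1Zero.{w} X₃ X₁) (h₂ : X₂ ∈ F) : X₁ ∈ F :=
  (h.2 X₁).2 fun _ hV => ext1Zero_X₁_of_split hip hsplit (h.ext1Zero hV h₂)

lemma cokernel_mem_right_of_split (h : IsCotorsionPair.{w} W F) (hip : IsShortExact i p)
    (hsplit : Ext1Zero.{w} X₃ X₁) (h₂ : X₂ ∈ F) : X₃ ∈ F :=
  (h.2 X₃).2 fun _ hV => ext1Zero_X₃_of_split hip hsplit (h.ext1Zero hV h₂)

/-- Pushing `0 → X₁ → X₂ → X₃ → 0` out along `j` gives `P` with `0 → E → P → X₃ → 0`, so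
`P ∈ F`, and `0 → X₂ → P → C → 0`, which splits because `X₂ ∈ F` and `C ∈ W`. -/
lemma cokernel_mem_right_of_preenvelope (h : IsCotorsionPair.{w} W F) (hip : IsShortExact i p)
    (h₂ : X₂ ∈ F) (h₃ : X₃ ∈ F) {E C : A} {j : X₁ ⟶ E} {q : E ⟶ C} (hjq : IsShortExact j q)
    (hE : E ∈ F) (hC : C ∈ W) : C ∈ F := by
  have sq := IsPushout.of_hasPushout j i
  have hP : pushout j i ∈ F := h.extension_mem_right (sq.flip.isShortExact hip) hE h₃
  exact h.cokernel_mem_right_of_split (sq.isShortExact hjq) (h.ext1Zero hC h₂) hP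

end IsCotorsionPair

theorem fibrant_subclass_closed_under_kernels_general [HasExt.{w} A]
    (W F W' F' : Set A)
    (h : IsInjectiveCotorsionPair.{w} W F) (h' : IsInjectiveCotorsionPair.{w} W' F') :
    ∀ ⦃X Y Z : A⦄ (i : X ⟶ Y) (p : Y ⟶ Z), IsShortExact i p →
      X ∈ F → Y ∈ F' → Z ∈ F' → X ∈ F' := by
  intro X Y Z i p hip hX hY hZ
  obtain ⟨E, C, j, q, hE, hC, hjq⟩ := h'.1.2.2 X
  have hCF' : C ∈ F' := h'.1.1.cokernel_mem_right_of_preenvelope hip hY hZ hjq hE hC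
  have hCinj : Injective C := (h'.2.2 C).1 ⟨hC, hCF'⟩
  have hCW : C ∈ W := ((h.2.2 C).2 hCinj).1
  exact h'.1.1.kernel_mem_right_of_split hjq (h.1.1.ext1Zero hCW hX) hE

theorem fibrant_subclass_closed_under_kernels [EnoughInjectives A] [HasExt.{w} A]
    (W F W' F' : Set A)
    (h : IsInjectiveCotorsionPair.{w} W F) (h' : IsInjectiveCotorsionPair.{w} W' F')
    (hsub : F' ⊆ F) :
    ∀ ⦃X Y Z : A⦄ (i : X ⟶ Y) (p : Y ⟶ Z), IsShortExact i p →
      X ∈ F → Y ∈ F' → Z ∈ F' → X ∈ F' :=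
  fibrant_subclass_closed_under_kernels_general W F W' F' h h'
end
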